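/- arXiv:2501.03710 — 2 statements merged into one kernel-verified Lean document; each statement's English description precedes it below -/
import Mathlib

section
/- Let G be a finite simple graph without isolated vertices and let E₁, E₂ be a partition of E(G) such that the spanning subgraphs G[E₁] = (V(G),E₁) and G[E₂] = (V(G),E₂) have no isolated vertices. Then for every linear order π of V(G), at least one of G[E₁], G[E₂] has an induced matching M crossing π with 2·|M| ≥ lsimw(G). -/
/-! ## Common definitions -/

/-- A (partial) assignment over variable type `V`. -/
abbrev Asg (V : Type*) := V → Option Bool

/-- The domain (set of variables) of an assignment. -/
def Asg.dom {V : Type*} (g : Asg V) : Set V := {x | g x ≠ none}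

/-- Union of two assignments (the left one takes precedence where both are defined). -/
def Asg.union {V : Type*} (g h : Asg V) : Asg V := fun x => (g x).orElse (fun _ => h x)

/-- A set of assignments is uniform with common domain `S`. -/
def UniformOn {V : Type*} (H : Set (Asg V)) (S : Set V) : Prop := ∀ g ∈ H, g.dom = S

/-- The product `H₁ × H₂` of two sets of assignments. -/
def AsgProd {V : Type*} (H₁ H₂ : Set (Asg V)) : Set (Asg V) := Set.image2 Asg.union H₁ H₂

/-- `H`, a uniform set of assignments with variable set `W`, is a rectangle that
breaks `Y ⊆ W`: it has nonempty uniform witnesses whose nonempty variable sets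
partition `W` and both meet `Y`. -/
def BreaksOn {V : Type*} (H : Set (Asg V)) (W Y : Set V) : Prop :=
  ∃ (H₁ H₂ : Set (Asg V)) (S₁ S₂ : Set V),
    H₁.Nonempty ∧ H₂.Nonempty ∧ UniformOn H₁ S₁ ∧ UniformOn H₂ S₂ ∧
    S₁.Nonempty ∧ S₂.Nonempty ∧ S₁ ∩ S₂ = ∅ ∧ S₁ ∪ S₂ = W ∧
    H = AsgProd H₁ H₂ ∧ (Y ∩ S₁).Nonempty ∧ (Y ∩ S₂).Nonempty

/-- Combination of finitely many assignments (with pairwise disjoint domains). -/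
def Asg.combine {V : Type*} {m : ℕ} (c : Fin m → Asg V) : Asg V :=
  fun x => (List.finRange m).foldr (fun i acc => (c i x).orElse (fun _ => acc)) none

/-- The product `H 0 × ⋯ × H (m-1)` of finitely many sets of assignments. -/
def bigProd {V : Type*} {m : ℕ} (H : Fin m → Set (Asg V)) : Set (Asg V) :=
  {g | ∃ c : Fin m → Asg V, (∀ i, c i ∈ H i) ∧ g = Asg.combine c}

/-- `M` is a matching of `G` (a set of pairwise disjoint edges of `G`). -/
def IsMatchingSet {V : Type*} (G : SimpleGraph V) (M : Set (Sym2 V)) : Prop :=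
  M ⊆ G.edgeSet ∧ ∀ e ∈ M, ∀ f ∈ M, e ≠ f → ∀ x, x ∈ e → x ∉ f

/-- The set `V(M)` of endpoints of a set of edges. -/
def endpoints {V : Type*} (M : Set (Sym2 V)) : Set V := {v | ∃ e ∈ M, v ∈ e}

/-- `M` is an induced matching of `G`: a matching such that the subgraph of `G`
induced by `V(M)` has edge set exactly `M`. -/
def IsInducedMatchingSet {V : Type*} (G : SimpleGraph V) (M : Set (Sym2 V)) : Prop :=
  IsMatchingSet G M ∧ ∀ e ∈ G.edgeSet, (∀ v ∈ e, v ∈ endpoints M) → e ∈ M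

/-- `P` is a prefix of the linear order `π`. -/
def IsPrefix {V : Type*} (π : LinearOrder V) (P : Set V) : Prop :=
  ∀ x ∈ P, ∀ y, π.le y x → y ∈ P

/-- `M` crosses the linear order `π`: some prefix of `π` contains exactly one
endpoint of every edge of `M`. -/
def Crosses {V : Type*} (π : LinearOrder V) (M : Set (Sym2 V)) : Prop :=
  ∃ P : Set V, IsPrefix π P ∧ ∀ e ∈ M, ∃ x y, e = s(x, y) ∧ x ∈ P ∧ y ∉ P

/-- Linear special induced matching width: the minimum over linear orders of the
maximum size of an induced matching crossing the order. -/
noncomputable def lsimw {V : Type*} (G : SimpleGraph V) : ℕ :=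
  sInf {k | ∃ π : LinearOrder V, ∀ M : Set (Sym2 V),
    IsInducedMatchingSet G M → Crosses π M → M.ncard ≤ k}

/-- Linear maximum matching width: as `lsimw` but with arbitrary matchings. -/
noncomputable def lmmw {V : Type*} (G : SimpleGraph V) : ℕ :=
  sInf {k | ∃ π : LinearOrder V, ∀ M : Set (Sym2 V),
    IsMatchingSet G M → Crosses π M → M.ncard ≤ k}

/-- The bipartite double cover `G*`; vertex `v[1]` is `(v, false)` and `v[2]` is `(v, true)`. -/
def doubleCover {V : Type*} (G : SimpleGraph V) : SimpleGraph (V × Bool) where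
  Adj a b := G.Adj a.1 b.1 ∧ a.2 ≠ b.2
  symm := ⟨fun a b h => ⟨h.1.symm, h.2.symm⟩⟩
  loopless := ⟨fun a h => h.2 rfl⟩

/-- `M`, a matching of the double cover, neatly crosses a linear order `π` of
`V × Bool`: every edge of `M` goes from `U[1]` to `W[2]` for some `U, W ⊆ V`, and
some prefix of `π` contains all endpoints of `M` on one of the two sides and none
of the endpoints on the other side. -/
def NeatlyCrosses {V : Type*} (π : LinearOrder (V × Bool)) (M : Set (Sym2 (V × Bool))) : Prop :=
  ∃ U W : Set V,
    (∀ e ∈ M, ∃ u ∈ U, ∃ w ∈ W, e = s((u, false), (w, true))) ∧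
    ∃ P : Set (V × Bool), IsPrefix π P ∧
      ((∀ v ∈ endpoints M, (v.2 = false → v ∈ P) ∧ (v.2 = true → v ∉ P)) ∨
       (∀ v ∈ endpoints M, (v.2 = true → v ∈ P) ∧ (v.2 = false → v ∉ P)))

/-- The `n × n` grid graph. -/
def gridGraph (n : ℕ) : SimpleGraph (Fin n × Fin n) :=
  SimpleGraph.fromRel (fun p q =>
    (p.1 = q.1 ∧ (p.2 : ℕ) + 1 = (q.2 : ℕ)) ∨ (p.2 = q.2 ∧ (p.1 : ℕ) + 1 = (q.1 : ℕ)))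

/-- The spanning subgraph of the `n × n` grid consisting of the horizontal edges. -/
def gridHoriz (n : ℕ) : SimpleGraph (Fin n × Fin n) :=
  SimpleGraph.fromRel (fun p q => p.1 = q.1 ∧ (p.2 : ℕ) + 1 = (q.2 : ℕ))

/-- A clause: a set of literals, a literal being a variable with a polarity
(`true` = positive). -/
abbrev Clause (W : Type*) := Set (W × Bool)

/-- A CNF: a set of clauses. -/
abbrev CNF (W : Type*) := Set (Clause W)

/-- A total assignment satisfies a CNF. -/
def Satisfies {W : Type*} (a : W → Bool) (φ : CNF W) : Prop :=
  ∀ C ∈ φ, ∃ l ∈ C, a l.1 = l.2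

/-- The set of variables occurring in a CNF. -/
def cnfVars {W : Type*} (φ : CNF W) : Set W := {x | ∃ C ∈ φ, ∃ b, (x, b) ∈ C}

/-- The CNF `φ(G)`: a positive clause `(u ∨ v)` for every edge of `G`. -/
def phiCNF {V : Type*} (G : SimpleGraph V) : CNF V :=
  {C | ∃ e ∈ G.edgeSet, C = {l | ∃ x ∈ e, l = (x, true)}}

/-- The CNF `ψ(G)`: the positive edge clauses of the double cover `G*` together with
the two all-negative clauses `⋁ᵥ ¬v[1]` and `⋁ᵥ ¬v[2]`. -/
def psiCNF {V : Type*} (G : SimpleGraph V) : CNF (V × Bool) :=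
  {C | ∃ e ∈ (doubleCover G).edgeSet, C = {l | ∃ x ∈ e, l = (x, true)}} ∪
    {{l | ∃ v : V, l = ((v, false), false)}, {l | ∃ v : V, l = ((v, true), false)}}

/-- Make a total assignment out of a partial one (defaulting to `false` off the domain). -/
def Asg.totalize {W : Type*} (g : Asg W) : W → Bool := fun x => (g x).getD false

/-- `S(φ)|_g`: assignments `h` with domain `var(φ) \ var(g)` such that `g ∪ h` satisfies `φ`. -/
def solsRestrict {W : Type*} (φ : CNF W) (g : Asg W) : Set (Asg W) :=
  {h | h.dom = cnfVars φ \ g.dom ∧ Satisfies (Asg.totalize (Asg.union g h)) φ}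

/-- A partial assignment satisfies a clause. -/
def satClausePartial {W : Type*} (g : Asg W) (C : Clause W) : Prop :=
  ∃ l ∈ C, g l.1 = some l.2

/-- The CNF `φ[g]`: delete clauses satisfied by `g` and remove from the remaining
clauses all literals whose variable is assigned by `g`. -/
def cnfRestrictFormula {W : Type*} (φ : CNF W) (g : Asg W) : CNF W :=
  {C' | ∃ C ∈ φ, ¬ satClausePartial g C ∧ C' = {l ∈ C | l.1 ∉ g.dom}}

/-- The total satisfying assignments of a CNF, over its variable set. -/
def totalSols {W : Type*} (φ : CNF W) : Set (Asg W) :=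
  {h | h.dom = cnfVars φ ∧ Satisfies (Asg.totalize h) φ}

/-- All assignments with domain `Y`. -/
def allAsgOn {W : Type*} (Y : Set W) : Set (Asg W) := {h | h.dom = Y}

/-- Binary decision trees over variables `X`. -/
inductive DTree (X : Type*) where
  | leaf : Bool → DTree X
  | node : X → DTree X → DTree X → DTree X

namespace DTree

/-- The size (number of nodes) of a decision tree. -/
def size {X : Type*} : DTree X → ℕ
  | leaf _ => 1
  | node _ t0 t1 => 1 + t0.size + t1.size

/-- The variables occurring in a decision tree. -/
def varsOf {X : Type*} : DTree X → Set X
  | leaf _ => ∅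
  | node x t0 t1 => {x} ∪ t0.varsOf ∪ t1.varsOf

/-- The read-once condition: no variable occurs twice on a root-leaf path. -/
def ReadOnce {X : Type*} : DTree X → Prop
  | leaf _ => True
  | node x t0 t1 => x ∉ t0.varsOf ∧ x ∉ t1.varsOf ∧ t0.ReadOnce ∧ t1.ReadOnce

/-- Evaluation of a decision tree on a total assignment. -/
def eval {X : Type*} : DTree X → (X → Bool) → Bool
  | leaf b, _ => b
  | node x t0 t1, a => if a x then t1.eval a else t0.eval a

end DTree

/-- `(τ, B)` is a tree decomposition of `H`. -/
def IsTreeDecomp {V : Type u} {T : Type v} (H : SimpleGraph V) (τ : SimpleGraph T)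
    (B : T → Set V) : Prop :=
  τ.IsTree ∧ (∀ e ∈ H.edgeSet, ∃ t, ∀ v ∈ e, v ∈ B t) ∧
    (∀ v : V, (τ.induce {t | v ∈ B t}).Connected)

/-- The treewidth of a graph: minimum width over all tree decompositions. -/
noncomputable def treewidth {V : Type u} (H : SimpleGraph V) : ℕ :=
  sInf {k | ∃ (T : Type) (τ : SimpleGraph T) (B : T → Set V),
    IsTreeDecomp H τ B ∧ ∀ t, (B t).ncard ≤ k + 1}

/-- `B : Fin m → Set V` is a path decomposition of `H`. -/
def IsPathDecomp {V : Type u} (H : SimpleGraph V) (m : ℕ) (B : Fin m → Set V) : Prop :=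
  (∀ e ∈ H.edgeSet, ∃ i, ∀ v ∈ e, v ∈ B i) ∧
    (∀ v : V, (∃ i, v ∈ B i) ∧
      ∀ i j k : Fin m, i ≤ j → j ≤ k → v ∈ B i → v ∈ B k → v ∈ B j)

/-- The pathwidth of a graph: minimum width over all path decompositions. -/
noncomputable def pathwidth {V : Type u} (H : SimpleGraph V) : ℕ :=
  sInf {k | ∃ (m : ℕ) (B : Fin m → Set V), IsPathDecomp H m B ∧ ∀ i, (B i).ncard ≤ k + 1}

/-- The incidence graph of a CNF: variables on one side, clauses on the other,
a variable adjacent to exactly the clauses in which it occurs. -/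
def incidenceGraph {W : Type u} (φ : CNF W) : SimpleGraph (W ⊕ {C : Clause W // C ∈ φ}) :=
  SimpleGraph.fromRel (fun a b => ∃ (x : W) (C : {C : Clause W // C ∈ φ}),
    a = Sum.inl x ∧ b = Sum.inr C ∧ ∃ bb : Bool, (x, bb) ∈ C.1)

/-! Fix an induced matching `M` of `G` that crosses `π` and has at least `lsimw G` edges: one
exists because otherwise `π` itself would witness a smaller width. Splitting `M` along
`E₁ ∪ E₂` keeps both halves induced in their spanning subgraphs and crossing `π`, and the
larger half has at least `|M| / 2` edges. -/

theorem Set.ncard_le_ncard_inter_add_ncard_inter {α : Type*} {M A B : Set α} (h : M ⊆ A ∪ B) :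
    M.ncard ≤ (M ∩ A).ncard + (M ∩ B).ncard :=
  calc M.ncard = (M ∩ A ∪ M ∩ B).ncard := by
        rw [← Set.inter_union_distrib_left, Set.inter_eq_left.2 h]
    _ ≤ (M ∩ A).ncard + (M ∩ B).ncard := Set.ncard_union_le _ _

open SimpleGraph

section

variable {V : Type*}

theorem endpoints_mono {M N : Set (Sym2 V)} (h : M ⊆ N) : endpoints M ⊆ endpoints N :=
  fun _ ⟨e, he, hv⟩ => ⟨e, h he, hv⟩

theorem isInducedMatchingSet_empty (G : SimpleGraph V) : IsInducedMatchingSet G ∅ := by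
  refine ⟨⟨Set.empty_subset _, fun _ he => he.elim⟩, fun e _ hv => ?_⟩
  obtain ⟨_, he, _⟩ := hv _ e.out_fst_mem
  exact he.elim

theorem IsInducedMatchingSet.inter_edgeSet {G H : SimpleGraph V} {M : Set (Sym2 V)}
    (hHG : H ≤ G) (hM : IsInducedMatchingSet G M) : IsInducedMatchingSet H (M ∩ H.edgeSet) := by
  obtain ⟨⟨-, hdisj⟩, hind⟩ := hM
  refine ⟨⟨Set.inter_subset_right, fun e he f hf => hdisj e he.1 f hf.1⟩,
    fun e he hv => ⟨hind e (edgeSet_mono hHG he) fun v hve => ?_, he⟩⟩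
  exact endpoints_mono Set.inter_subset_left (hv v hve)

theorem IsInducedMatchingSet.inter_fromEdgeSet {G : SimpleGraph V} {M E : Set (Sym2 V)}
    (hE : E ⊆ G.edgeSet) (hM : IsInducedMatchingSet G M) :
    IsInducedMatchingSet (fromEdgeSet E) (M ∩ E) := by
  have hHG : fromEdgeSet E ≤ G := fromEdgeSet_edgeSet G ▸ fromEdgeSet_mono hE
  have hME : M ∩ (fromEdgeSet E).edgeSet = M ∩ E := by
    rw [edgeSet_fromEdgeSet, ← Set.inter_sdiff_assoc, sdiff_eq_left, Set.disjoint_left]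
    exact fun e he hdiag => G.not_isDiag_of_mem_edgeSet (hM.1.1 he.1) hdiag
  exact hME ▸ hM.inter_edgeSet hHG

theorem Crosses.mono {π : LinearOrder V} {M N : Set (Sym2 V)} (h : M ⊆ N) (hN : Crosses π N) :
    Crosses π M :=
  let ⟨P, hP, hcross⟩ := hN
  ⟨P, hP, fun e he => hcross e (h he)⟩

theorem crosses_empty (π : LinearOrder V) : Crosses π ∅ :=
  ⟨∅, fun _ hx => hx.elim, fun _ he => he.elim⟩

theorem exists_isInducedMatchingSet_crosses_lsimw_le (G : SimpleGraph V) (π : LinearOrder V) :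
    ∃ M, IsInducedMatchingSet G M ∧ Crosses π M ∧ lsimw G ≤ M.ncard := by
  by_contra! hsmall
  have hwidth : lsimw G ≤ lsimw G - 1 :=
    Nat.sInf_le ⟨π, fun M hM hcross => Nat.le_sub_one_of_lt (hsmall M hM hcross)⟩
  have hpos := hsmall ∅ (isInducedMatchingSet_empty G) (crosses_empty π)
  omega

end

theorem stmt2_general {V : Type*} (G : SimpleGraph V)
    (E₁ E₂ : Set (Sym2 V)) (hU : E₁ ∪ E₂ = G.edgeSet)
    (π : LinearOrder V) :
    ∃ M : Set (Sym2 V),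
      ((IsInducedMatchingSet (SimpleGraph.fromEdgeSet E₁) M ∨
          IsInducedMatchingSet (SimpleGraph.fromEdgeSet E₂) M) ∧ Crosses π M) ∧
        lsimw G ≤ 2 * M.ncard := by
  obtain ⟨M, hM, hcross, hwidth⟩ := exists_isInducedMatchingSet_crosses_lsimw_le G π
  have hsplit := Set.ncard_le_ncard_inter_add_ncard_inter (hU ▸ hM.1.1)
  have hE₁ : E₁ ⊆ G.edgeSet := hU ▸ Set.subset_union_left
  have hE₂ : E₂ ⊆ G.edgeSet := hU ▸ Set.subset_union_right
  have hhalf (E : Set (Sym2 V)) : Crosses π (M ∩ E) := hcross.mono Set.inter_subset_left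
  rcases le_total (M ∩ E₁).ncard (M ∩ E₂).ncard with h | h
  · exact ⟨M ∩ E₂, ⟨.inr (hM.inter_fromEdgeSet hE₂), hhalf E₂⟩, by omega⟩
  · exact ⟨M ∩ E₁, ⟨.inl (hM.inter_fromEdgeSet hE₁), hhalf E₁⟩, by omega⟩

/-- if `E₁, E₂` partition `E(G)` with both spanning subgraphs having no
isolated vertices, then every linear order `π` of `V(G)` is crossed by an induced
matching `M` of `G[E₁]` or of `G[E₂]` with `2|M| ≥ lsimw(G)`. -/
theorem stmt2 {V : Type*} [Fintype V] (G : SimpleGraph V)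
    (hiso : ∀ v : V, ∃ u, G.Adj v u)
    (E₁ E₂ : Set (Sym2 V)) (hU : E₁ ∪ E₂ = G.edgeSet) (hI : E₁ ∩ E₂ = ∅)
    (h1 : ∀ v : V, ∃ e ∈ E₁, v ∈ e) (h2 : ∀ v : V, ∃ e ∈ E₂, v ∈ e)
    (π : LinearOrder V) :
    ∃ M : Set (Sym2 V),
      ((IsInducedMatchingSet (SimpleGraph.fromEdgeSet E₁) M ∨
          IsInducedMatchingSet (SimpleGraph.fromEdgeSet E₂) M) ∧ Crosses π M) ∧
        lsimw G ≤ 2 * M.ncard :=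
  stmt2_general G E₁ E₂ hU π
end

section
/- Let G be a finite simple graph without isolated vertices and let M = {{u_i[1],w_i[2]} : 1 ≤ i ≤ q} be an induced matching of the bipartite double cover G* (with u₁,…,u_q pairwise distinct and w₁,…,w_q pairwise distinct). Let D ⊆ V(G*) satisfy {u₁[1],…,u_q[1]} ⊆ D and D ∩ {w₁[2],…,w_q[2]} = ∅, and let g be an assignment with domain D such that g(x) = 1 for all x ∈ D \ {u₁[1],…,u_q[1]}, g(u_i[1]) = 0 for at least one index i, and g(u_i[1]) = 1 for at least two indices i. Let I(g) = {i : g(u_i[1]) = 1}. Then the uniform set S(ψ(G))|_g is not a rectangle that breaks the set {w_i[2] : i ∈ I(g)}. -/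
/-! For `i ∈ I(g)`, the assignment that is `0` at `wᵢ[2]` and `1` everywhere else outside `D`
extends `g` to a model of `ψ(G)`: the only edge clauses at risk are `(x[1] ∨ wᵢ[2])`, and since
`M` is induced, such an `x[1] ∈ D` is either `uᵢ[1]` or not matched at all, so `g` sets it to `1`.
If a rectangle put `wᵢ[2]` into `S₁` and `wⱼ[2]` into `S₂`, gluing the `S₁`-part of the `j`-th
model to the `S₂`-part of the `i`-th one would give a model setting all of `V[2]` to `1`,
which violates the clause `⋁ᵥ ¬v[2]`. -/

section Assignments

variable {W : Type*}

theorem Asg.totalize_union_of_eq_some {g : Asg W} (h : Asg W) {x : W} {b : Bool}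
    (hx : g x = some b) : (g.union h).totalize x = b := by
  simp [Asg.totalize, Asg.union, hx]

theorem Asg.totalize_union_of_eq_none {g : Asg W} (h : Asg W) {x : W}
    (hx : g x = none) : (g.union h).totalize x = (h x).getD false := by
  simp [Asg.totalize, Asg.union, hx]

theorem Asg.eq_none_of_notMem_dom {g : Asg W} {x : W} (hx : x ∉ g.dom) : g x = none :=
  not_not.mp hx

theorem AsgProd.exists_mix {H₁ H₂ : Set (Asg W)} {S₁ : Set W} (hU₁ : UniformOn H₁ S₁)
    {h h' : Asg W} (hh : h ∈ AsgProd H₁ H₂) (hh' : h' ∈ AsgProd H₁ H₂) :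
    ∃ k ∈ AsgProd H₁ H₂, (∀ x ∈ S₁, k x = h' x) ∧ ∀ x ∉ S₁, k x = h x := by
  obtain ⟨a, ha, b, hb, rfl⟩ := hh
  obtain ⟨a', ha', b', -, rfl⟩ := hh'
  refine ⟨a'.union b, ⟨a', ha', b, hb, rfl⟩, fun x hx => ?_, fun x hx => ?_⟩
  · obtain ⟨c, hc⟩ := Option.ne_none_iff_exists'.mp (show x ∈ a'.dom from hU₁ a' ha' ▸ hx)
    simp [Asg.union, hc]
  · have ha'x : a' x = none := Asg.eq_none_of_notMem_dom (hU₁ a' ha' ▸ hx)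
    have hax : a x = none := Asg.eq_none_of_notMem_dom (hU₁ a ha ▸ hx)
    simp [Asg.union, ha'x, hax]

end Assignments

section Psi

variable {V : Type*} {G : SimpleGraph V}

theorem cnfVars_psiCNF : cnfVars (psiCNF G) = Set.univ := by
  refine Set.eq_univ_of_forall fun ⟨v, b⟩ => ?_
  cases b
  · exact ⟨_, Or.inr (Set.mem_insert _ _), false, v, rfl⟩
  · exact ⟨_, Or.inr (Set.mem_insert_of_mem _ rfl), false, v, rfl⟩

theorem satisfies_psiCNF_iff (a : V × Bool → Bool) :
    Satisfies a (psiCNF G) ↔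
      (∀ x y, G.Adj x y → a (x, false) = true ∨ a (y, true) = true) ∧
        (∃ v, a (v, false) = false) ∧ ∃ v, a (v, true) = false := by
  have hC₁ : {l | ∃ v : V, l = ((v, false), false)} ∈ psiCNF G := Or.inr (Set.mem_insert _ _)
  have hC₂ : {l | ∃ v : V, l = ((v, true), false)} ∈ psiCNF G :=
    Or.inr (Set.mem_insert_of_mem _ rfl)
  constructor
  · intro h
    refine ⟨fun x y hxy => ?_, ?_, ?_⟩
    · have he : s((x, false), (y, true)) ∈ (doubleCover G).edgeSet := ⟨hxy, by simp⟩
      obtain ⟨_, ⟨z, hz, rfl⟩, hza⟩ := h _ (Or.inl ⟨_, he, rfl⟩)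
      rcases Sym2.mem_iff.mp hz with rfl | rfl
      exacts [Or.inl hza, Or.inr hza]
    · obtain ⟨_, ⟨v, rfl⟩, hv⟩ := h _ hC₁
      exact ⟨v, hv⟩
    · obtain ⟨_, ⟨v, rfl⟩, hv⟩ := h _ hC₂
      exact ⟨v, hv⟩
  · rintro ⟨hedge, ⟨v₁, hv₁⟩, v₂, hv₂⟩ C (⟨e, he, rfl⟩ | rfl | rfl)
    · induction e using Sym2.ind with
      | h p r =>
      obtain ⟨hadj, hne⟩ := he
      obtain ⟨x, _ | _⟩ := p <;> obtain ⟨y, _ | _⟩ := r <;>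
        simp only [ne_eq, not_true_eq_false] at hne
      · rcases hedge x y hadj with h | h
        · exact ⟨_, ⟨_, Sym2.mem_mk_left _ _, rfl⟩, h⟩
        · exact ⟨_, ⟨_, Sym2.mem_mk_right _ _, rfl⟩, h⟩
      · rcases hedge y x hadj.symm with h | h
        · exact ⟨_, ⟨_, Sym2.mem_mk_right _ _, rfl⟩, h⟩
        · exact ⟨_, ⟨_, Sym2.mem_mk_left _ _, rfl⟩, h⟩
    · exact ⟨_, ⟨v₁, rfl⟩, hv₁⟩
    · exact ⟨_, ⟨v₂, rfl⟩, hv₂⟩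

end Psi

section Fooling

variable {W : Type*}

open Classical in
noncomputable def allTrueExcept (D : Set W) (y : W) : Asg W :=
  fun x => if x ∈ D then none else some (decide (x ≠ y))

theorem allTrueExcept_self {D : Set W} {y : W} (hy : y ∉ D) :
    allTrueExcept D y y = some false := by
  simp [allTrueExcept, hy]

theorem allTrueExcept_of_ne {D : Set W} {x y : W} (hx : x ∉ D) (hxy : x ≠ y) :
    allTrueExcept D y x = some true := by
  simp [allTrueExcept, hx, hxy]

theorem dom_allTrueExcept (D : Set W) (y : W) : (allTrueExcept D y).dom = Dᶜ := by
  ext x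
  by_cases hx : x ∈ D <;> simp [allTrueExcept, Asg.dom, hx]

variable {V : Type*} {G : SimpleGraph V} {g : Asg (V × Bool)} {D : Set (V × Bool)}

theorem allTrueExcept_mem_solsRestrict_psiCNF (hgdom : g.dom = D) {y : V} (hy : (y, true) ∉ D)
    (hV₂ : ∀ v, (v, true) ∈ D → g (v, true) = some true)
    (hnbr : ∀ x, G.Adj x y → (x, false) ∈ D → g (x, false) = some true)
    (hneg : ∃ v, g (v, false) = some false) :
    allTrueExcept D (y, true) ∈ solsRestrict (psiCNF G) g := by
  refine ⟨by rw [cnfVars_psiCNF, hgdom, dom_allTrueExcept, Set.compl_eq_univ_sdiff], ?_⟩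
  have hoff : ∀ x ∉ D, ∀ b, allTrueExcept D (y, true) x = some b →
      (g.union (allTrueExcept D (y, true))).totalize x = b := fun x hx b hb => by
    rw [Asg.totalize_union_of_eq_none _ (Asg.eq_none_of_notMem_dom (hgdom ▸ hx)), hb,
      Option.getD_some]
  rw [satisfies_psiCNF_iff]
  refine ⟨fun x z hxz => ?_, ?_, y, hoff _ hy _ (allTrueExcept_self hy)⟩
  · by_cases hzD : (z, true) ∈ D
    · exact Or.inr (Asg.totalize_union_of_eq_some _ (hV₂ z hzD))
    by_cases hzy : z = y
    · subst hzy
      left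
      by_cases hxD : (x, false) ∈ D
      · exact Asg.totalize_union_of_eq_some _ (hnbr x hxz hxD)
      · exact hoff _ hxD _ (allTrueExcept_of_ne hxD (by simp))
    · exact Or.inr (hoff _ hzD _ (allTrueExcept_of_ne hzD (by simpa using hzy)))
  · obtain ⟨v, hv⟩ := hneg
    exact ⟨v, Asg.totalize_union_of_eq_some _ hv⟩

theorem notMem_solsRestrict_psiCNF (hgdom : g.dom = D)
    (hV₂ : ∀ v, (v, true) ∈ D → g (v, true) = some true) {k : Asg (V × Bool)}
    (hk : ∀ v, (v, true) ∉ D → k (v, true) = some true) :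
    k ∉ solsRestrict (psiCNF G) g := by
  rintro ⟨-, hsat⟩
  obtain ⟨-, -, v, hv⟩ := (satisfies_psiCNF_iff _).mp hsat
  by_cases hvD : (v, true) ∈ D
  · simp [Asg.totalize_union_of_eq_some _ (hV₂ v hvD)] at hv
  · simp [Asg.totalize_union_of_eq_none _ (Asg.eq_none_of_notMem_dom (hgdom ▸ hvD)),
      hk v hvD] at hv

end Fooling

theorem eq_of_adj_of_isInducedMatchingSet_doubleCover {V : Type*} {G : SimpleGraph V} {q : ℕ}
    {u w : Fin q → V} (hw : Function.Injective w) {M : Set (Sym2 (V × Bool))}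
    (hM : M = {e | ∃ i : Fin q, e = s((u i, false), (w i, true))})
    (hMind : IsInducedMatchingSet (doubleCover G) M) {m k : Fin q} (hadj : G.Adj (u m) (w k)) :
    u m = u k := by
  have hum : (u m, false) ∈ endpoints M :=
    ⟨_, by rw [hM]; exact ⟨m, rfl⟩, Sym2.mem_mk_left _ _⟩
  have hwk : (w k, true) ∈ endpoints M :=
    ⟨_, by rw [hM]; exact ⟨k, rfl⟩, Sym2.mem_mk_right _ _⟩
  have he : s((u m, false), (w k, true)) ∈ M :=
    hMind.2 _ ⟨hadj, by simp⟩ fun v hv => by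
      rcases Sym2.mem_iff.mp hv with rfl | rfl
      exacts [hum, hwk]
  rw [hM] at he
  obtain ⟨l, hl⟩ := he
  rcases Sym2.eq_iff.mp hl with ⟨h₁, h₂⟩ | ⟨h₁, -⟩
  · simp only [Prod.mk.injEq, and_true] at h₁ h₂
    rw [h₁, hw h₂]
  · exact absurd (congrArg Prod.snd h₁) (by simp)

theorem stmt6_general {V : Type*} (G : SimpleGraph V)
    (q : ℕ) (u w : Fin q → V)
    (hw : Function.Injective w)
    (M : Set (Sym2 (V × Bool)))
    (hM : M = {e | ∃ i : Fin q, e = s((u i, false), (w i, true))})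
    (hMind : IsInducedMatchingSet (doubleCover G) M)
    (D : Set (V × Bool))
    (hD2 : ∀ i : Fin q, (w i, true) ∉ D)
    (g : Asg (V × Bool)) (hgdom : g.dom = D)
    (hg1 : ∀ x ∈ D, (∀ i : Fin q, x ≠ (u i, false)) → g x = some true)
    (hg0 : ∃ i : Fin q, g (u i, false) = some false) :
    ¬ BreaksOn (solsRestrict (psiCNF G) g) (Set.univ \ D)
        {x | ∃ i : Fin q, g (u i, false) = some true ∧ x = (w i, true)} := by
  rintro ⟨H₁, H₂, S₁, S₂, -, -, hU₁, -, -, -, hdisj, -, hprod,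
    ⟨_, ⟨i, hgi, rfl⟩, hi₁⟩, ⟨_, ⟨j, hgj, rfl⟩, hj₂⟩⟩
  have hV₂ : ∀ v, (v, true) ∈ D → g (v, true) = some true := fun v hv => hg1 _ hv (by simp)
  have hsol : ∀ k, g (u k, false) = some true →
      allTrueExcept D (w k, true) ∈ solsRestrict (psiCNF G) g := by
    intro k hk
    refine allTrueExcept_mem_solsRestrict_psiCNF hgdom (hD2 k) hV₂ (fun x hx hxD => ?_)
      (hg0.elim fun f hf => ⟨u f, hf⟩)
    by_cases hxu : ∃ m, x = u m
    · obtain ⟨m, rfl⟩ := hxu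
      rwa [eq_of_adj_of_isInducedMatchingSet_doubleCover hw hM hMind hx]
    · exact hg1 _ hxD fun m h => hxu ⟨m, congrArg Prod.fst h⟩
  obtain ⟨k, hk, hkS₁, hkS₂⟩ :=
    AsgProd.exists_mix hU₁ (hprod ▸ hsol i hgi) (hprod ▸ hsol j hgj)
  refine notMem_solsRestrict_psiCNF hgdom hV₂ (fun v hvD => ?_) (hprod ▸ hk)
  by_cases hv : (v, true) ∈ S₁
  · have hvj : (v, true) ≠ (w j, true) := ne_of_mem_of_not_mem hv
      (Set.disjoint_iff_inter_eq_empty.mpr hdisj |>.notMem_of_mem_right hj₂)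
    rw [hkS₁ _ hv, allTrueExcept_of_ne hvD hvj]
  · rw [hkS₂ _ hv, allTrueExcept_of_ne hvD (ne_of_mem_of_not_mem hi₁ hv).symm]

/-- with `M = {{uᵢ[1], wᵢ[2]}}` an induced matching of `G*` and `g` a
fooling assignment on domain `D` (all of `uᵢ[1]` in `D`, no `wᵢ[2]` in `D`, everything
outside `{uᵢ[1]}` set to `1`, at least one `uᵢ[1]` set to `0` and at least two set to
`1`), the uniform set `S(ψ(G))|_g` is not a rectangle breaking `{wᵢ[2] : i ∈ I(g)}`. -/
theorem stmt6 {V : Type*} [Fintype V] (G : SimpleGraph V)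
    (hiso : ∀ v : V, ∃ u, G.Adj v u)
    (q : ℕ) (u w : Fin q → V)
    (hu : Function.Injective u) (hw : Function.Injective w)
    (M : Set (Sym2 (V × Bool)))
    (hM : M = {e | ∃ i : Fin q, e = s((u i, false), (w i, true))})
    (hMind : IsInducedMatchingSet (doubleCover G) M)
    (D : Set (V × Bool))
    (hD1 : ∀ i : Fin q, (u i, false) ∈ D)
    (hD2 : ∀ i : Fin q, (w i, true) ∉ D)
    (g : Asg (V × Bool)) (hgdom : g.dom = D)
    (hg1 : ∀ x ∈ D, (∀ i : Fin q, x ≠ (u i, false)) → g x = some true)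
    (hg0 : ∃ i : Fin q, g (u i, false) = some false)
    (hg2 : ∃ i j : Fin q, i ≠ j ∧ g (u i, false) = some true ∧ g (u j, false) = some true) :
    ¬ BreaksOn (solsRestrict (psiCNF G) g) (Set.univ \ D)
        {x | ∃ i : Fin q, g (u i, false) = some true ∧ x = (w i, true)} :=
  stmt6_general G q u w hw M hM hMind D hD2 g hgdom hg1 hg0
end
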